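/- arXiv:1806.04277 — 7 statements merged into one kernel-verified Lean document; each statement's English description precedes it below -/
import Mathlib

section
/- For all strings S and T over an alphabet with decidable equality, the delete–insert edit distance satisfies d_DI(S,T) = |S| + |T| − 2·LCSS(S,T), where |S| and |T| denote the lengths of S and T. -/
/-- `StepsIn R k S T` holds if there is a sequence of exactly `k` steps of the
relation `R` transforming `S` into `T`. -/
def StepsIn {α : Type*} (R : List α → List α → Prop) : ℕ → List α → List α → Prop
  | 0, S, T => S = T
  | n + 1, S, T => ∃ M, R S M ∧ StepsIn R n M T

/-- A single delete or insert operation on a string. -/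
inductive DIStep {α : Type*} : List α → List α → Prop
  | del (U V : List α) (c : α) : DIStep (U ++ [c] ++ V) (U ++ V)
  | ins (U V : List α) (c : α) : DIStep (U ++ V) (U ++ [c] ++ V)

/-- The delete–insert edit distance: the minimum number of single-character
deletions and insertions transforming `S` into `T`. -/
noncomputable def dDI {α : Type*} (S T : List α) : ℕ :=
  sInf {n | StepsIn DIStep n S T}

/-- The length of a longest common subsequence of `S` and `T`. -/
noncomputable def lcss {α : Type*} (S T : List α) : ℕ :=
  sSup {n | ∃ L : List α, L.Sublist S ∧ L.Sublist T ∧ L.length = n}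

/-!
Deleting from `S` the letters outside a longest common subsequence and then inserting the
letters of `T` outside it takes `|S| + |T| - 2 lcss S T` steps. Conversely, a single deletion
does not increase `lcss S T`, and a single insertion increases it by at most one, so each step
lowers `|S| + |T| - 2 lcss S T` by at most one; at `S = T` this quantity is `0`.
-/

section StepsIn

variable {α : Type*} {R : List α → List α → Prop}

theorem StepsIn.single {S T : List α} (h : R S T) : StepsIn R 1 S T :=
  ⟨T, h, rfl⟩

theorem StepsIn.trans {m n : ℕ} {S M T : List α}
    (h₁ : StepsIn R m S M) (h₂ : StepsIn R n M T) : StepsIn R (m + n) S T := by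
  induction m generalizing S with
  | zero => cases h₁; simpa using h₂
  | succ m ih =>
    obtain ⟨M', hR, hs⟩ := h₁
    rw [Nat.succ_add]
    exact ⟨M', hR, ih hs⟩

theorem StepsIn.symm (hR : ∀ {S T}, R S T → R T S) {n : ℕ} {S T : List α}
    (h : StepsIn R n S T) : StepsIn R n T S := by
  induction n generalizing S with
  | zero => exact Eq.symm h
  | succ n ih =>
    obtain ⟨M, hSM, hMT⟩ := h
    exact (ih hMT).trans (.single (hR hSM))

theorem StepsIn.map {f : List α → List α} (hf : ∀ {S T}, R S T → R (f S) (f T))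
    {n : ℕ} {S T : List α} (h : StepsIn R n S T) : StepsIn R n (f S) (f T) := by
  induction n generalizing S with
  | zero => exact congrArg f (h : S = T)
  | succ n ih =>
    obtain ⟨M, hSM, hMT⟩ := h
    exact ⟨f M, hf hSM, ih hMT⟩

end StepsIn

section DIStep

variable {α : Type*}

theorem DIStep.symm {S T : List α} (h : DIStep S T) : DIStep T S := by
  cases h with
  | del U V c => exact .ins U V c
  | ins U V c => exact .del U V c

theorem DIStep.cons (a : α) {S T : List α} (h : DIStep S T) : DIStep (a :: S) (a :: T) := by
  cases h with
  | del U V c => exact .del (a :: U) V c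
  | ins U V c => exact .ins (a :: U) V c

theorem List.Sublist.stepsIn_dIStep {L S : List α} (h : L.Sublist S) :
    StepsIn DIStep (S.length - L.length) S L := by
  induction h with
  | slnil => rfl
  | @cons l₁ l₂ a h ih =>
    rw [length_cons, Nat.sub_add_comm h.length_le, Nat.add_comm]
    exact (StepsIn.single (.del [] l₂ a)).trans ih
  | cons_cons a _ ih =>
    simpa using ih.map (DIStep.cons a)

theorem stepsIn_dIStep_through_sublist {L S T : List α} (hS : L.Sublist S) (hT : L.Sublist T) :
    StepsIn DIStep (S.length - L.length + (T.length - L.length)) S T :=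
  hS.stepsIn_dIStep.trans (hT.stepsIn_dIStep.symm DIStep.symm)

end DIStep

section lcss

variable {α : Type*}

theorem bddAbove_lcss_set (S T : List α) :
    BddAbove {n | ∃ L : List α, L.Sublist S ∧ L.Sublist T ∧ L.length = n} :=
  ⟨S.length, by rintro _ ⟨_, hS, _, rfl⟩; exact hS.length_le⟩

theorem exists_sublist_sublist_length_eq_lcss (S T : List α) :
    ∃ L : List α, L.Sublist S ∧ L.Sublist T ∧ L.length = lcss S T :=
  Nat.sSup_mem ⟨0, by exact ⟨[], List.nil_sublist _, List.nil_sublist _, rfl⟩⟩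
    (bddAbove_lcss_set S T)

theorem List.Sublist.length_le_lcss {L S T : List α} (hS : L.Sublist S) (hT : L.Sublist T) :
    L.length ≤ lcss S T :=
  le_csSup (bddAbove_lcss_set S T) ⟨L, hS, hT, rfl⟩

theorem lcss_self (T : List α) : lcss T T = T.length := by
  obtain ⟨L, hL, -, hlen⟩ := exists_sublist_sublist_length_eq_lcss T T
  exact le_antisymm (hlen ▸ hL.length_le)
    ((List.Sublist.refl T).length_le_lcss (List.Sublist.refl T))

theorem lcss_mono_left {S S' T : List α} (h : S.Sublist S') : lcss S T ≤ lcss S' T := by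
  obtain ⟨L, hS, hT, hlen⟩ := exists_sublist_sublist_length_eq_lcss S T
  exact hlen ▸ (hS.trans h).length_le_lcss hT

theorem List.Sublist.exists_sublist_of_sublist_append_singleton_append {L U V : List α} {c : α}
    (h : L.Sublist (U ++ [c] ++ V)) :
    ∃ L' : List α, L'.Sublist (U ++ V) ∧ L'.Sublist L ∧ L.length ≤ L'.length + 1 := by
  rw [append_assoc] at h
  obtain ⟨L₁, L₂, rfl, h₁, h₂⟩ := sublist_append_iff.mp h
  rcases sublist_cons_iff.mp h₂ with h₂ | ⟨r, rfl, hr⟩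
  · exact ⟨L₁ ++ L₂, h₁.append h₂, .refl _, by simp⟩
  · exact ⟨L₁ ++ r, h₁.append hr, (Sublist.refl L₁).append (sublist_cons_self c r),
      by simp; omega⟩

theorem lcss_append_singleton_append_le (U V T : List α) (c : α) :
    lcss (U ++ [c] ++ V) T ≤ lcss (U ++ V) T + 1 := by
  obtain ⟨L, hS, hT, hlen⟩ := exists_sublist_sublist_length_eq_lcss (U ++ [c] ++ V) T
  obtain ⟨L', hL'S, hL'L, hL'len⟩ := hS.exists_sublist_of_sublist_append_singleton_append
  have := hL'S.length_le_lcss (hL'L.trans hT)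
  omega

end lcss

theorem DIStep.length_add_two_mul_lcss_le {α : Type*} {S M : List α} (T : List α)
    (h : DIStep S M) : S.length + 2 * lcss M T ≤ M.length + 1 + 2 * lcss S T := by
  cases h with
  | del U V c =>
    have := lcss_mono_left (T := T) (show (U ++ V).Sublist (U ++ [c] ++ V) by simp)
    simp only [List.length_append, List.length_singleton]
    omega
  | ins U V c =>
    have := lcss_append_singleton_append_le U V T c
    simp only [List.length_append, List.length_singleton]
    omega

theorem StepsIn.length_add_length_le {α : Type*} {k : ℕ} {S T : List α}
    (h : StepsIn DIStep k S T) : S.length + T.length ≤ k + 2 * lcss S T := by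
  induction k generalizing S with
  | zero =>
    cases (h : S = T)
    rw [lcss_self]
    omega
  | succ k ih =>
    obtain ⟨M, hSM, hMT⟩ := h
    have := ih hMT
    have := hSM.length_add_two_mul_lcss_le T
    omega

theorem dDI_eq_length_add_length_sub_two_mul_lcss_general
    {α : Type*} (S T : List α) :
    dDI S T = S.length + T.length - 2 * lcss S T := by
  obtain ⟨L, hS, hT, hlen⟩ := exists_sublist_sublist_length_eq_lcss S T
  have hsteps := stepsIn_dIStep_through_sublist hS hT
  have hupper : dDI S T ≤ S.length - L.length + (T.length - L.length) := Nat.sInf_le hsteps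
  have hoptimal : StepsIn DIStep (dDI S T) S T :=
    Nat.sInf_mem (s := {n | StepsIn DIStep n S T}) ⟨_, hsteps⟩
  have hlower := hoptimal.length_add_length_le
  have := hS.length_le
  have := hT.length_le
  omega

theorem dDI_eq_length_add_length_sub_two_mul_lcss
    {α : Type*} [DecidableEq α] (S T : List α) :
    dDI S T = S.length + T.length - 2 * lcss S T :=
  dDI_eq_length_add_length_sub_two_mul_lcss_general S T
end

section
/- Let S = U ++ [c] ++ V be a string in which c does not occur in V (so the displayed occurrence of c is the last occurrence of c in S). Then for every string T, LCSS(S, T ++ [c]) = max( LCSS(S, T), 1 + LCSS(U, T) ). -/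
/-! A longest common subsequence of `U ++ [c] ++ V` and `T ++ [c]` either avoids the final `c`
of `T ++ [c]`, and is then common to `U ++ [c] ++ V` and `T`, or ends with that `c`. In the
second case its last letter must be matched with an occurrence of `c` in `U ++ [c] ++ V` that is
not in `V`, so the rest of it is a common subsequence of `U` and `T`. -/

namespace List

variable {α : Type*}

theorem sublist_append_singleton_iff {L T : List α} {c : α} :
    L <+ T ++ [c] ↔ L <+ T ∨ ∃ L', L = L' ++ [c] ∧ L' <+ T := by
  constructor
  · intro h
    obtain ⟨L', M, rfl, hL', hM⟩ := sublist_append_iff.mp h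
    rcases sublist_singleton.mp hM with rfl | rfl
    · exact .inl (by simpa using hL')
    · exact .inr ⟨L', rfl, hL'⟩
  · rintro (h | ⟨L', rfl, h⟩)
    · exact h.trans (sublist_append_left T [c])
    · exact (append_sublist_append_right [c]).mpr h

theorem sublist_of_append_singleton_sublist {L U V : List α} {c : α} (hc : c ∉ V)
    (h : L ++ [c] <+ U ++ [c] ++ V) : L <+ U := by
  obtain ⟨M, N, hLc, hM, hN⟩ := sublist_append_iff.mp h
  rcases eq_nil_or_concat N with rfl | ⟨N', b, rfl⟩
  · rw [append_nil] at hLc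
    exact (append_sublist_append_right [c]).mp (hLc ▸ hM)
  · have hb : b = c := by
      rw [concat_eq_append, ← append_assoc] at hLc
      simpa using (append_inj' hLc rfl).2.symm
    exact absurd (hN.subset (by simp [hb])) hc

end List

section lcss

open List

variable {α : Type*}

theorem bddAbove_commonSublist_lengths (S T : List α) :
    BddAbove {n | ∃ L : List α, L <+ S ∧ L <+ T ∧ L.length = n} :=
  ⟨S.length, fun _ ⟨_, hS, _, hn⟩ => hn ▸ hS.length_le⟩

theorem le_lcss_of_sublist {S T L : List α} (hS : L <+ S) (hT : L <+ T) :
    L.length ≤ lcss S T :=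
  le_csSup (bddAbove_commonSublist_lengths S T) ⟨L, hS, hT, rfl⟩

theorem exists_sublist_length_eq_lcss (S T : List α) :
    ∃ L : List α, L <+ S ∧ L <+ T ∧ L.length = lcss S T :=
  Nat.sSup_mem (s := {n | ∃ L : List α, L <+ S ∧ L <+ T ∧ L.length = n})
    ⟨0, [], nil_sublist S, nil_sublist T, rfl⟩ (bddAbove_commonSublist_lengths S T)

theorem lcss_mono {S S' T T' : List α} (hS : S <+ S') (hT : T <+ T') :
    lcss S T ≤ lcss S' T' := by
  obtain ⟨L, hLS, hLT, hL⟩ := exists_sublist_length_eq_lcss S T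
  exact hL ▸ le_lcss_of_sublist (hLS.trans hS) (hLT.trans hT)

theorem lcss_add_one_le_lcss_append_singleton (S T : List α) (c : α) :
    lcss S T + 1 ≤ lcss (S ++ [c]) (T ++ [c]) := by
  obtain ⟨L, hS, hT, hL⟩ := exists_sublist_length_eq_lcss S T
  have := le_lcss_of_sublist ((append_sublist_append_right [c]).mpr hS)
    ((append_sublist_append_right [c]).mpr hT)
  simpa [hL] using this

end lcss

theorem lcss_append_last_occurrence_general {α : Type*}
    (U V T : List α) (c : α) (hc : c ∉ V) :
    lcss (U ++ [c] ++ V) (T ++ [c]) =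
      max (lcss (U ++ [c] ++ V) T) (1 + lcss U T) := by
  apply le_antisymm
  · obtain ⟨L, hS, hT, hL⟩ := exists_sublist_length_eq_lcss (U ++ [c] ++ V) (T ++ [c])
    rw [← hL]
    rcases List.sublist_append_singleton_iff.mp hT with hLT | ⟨L', rfl, hL'T⟩
    · exact le_max_of_le_left (le_lcss_of_sublist hS hLT)
    · have hU : L'.Sublist U := List.sublist_of_append_singleton_sublist hc hS
      have hlen := le_lcss_of_sublist hU hL'T
      exact le_max_of_le_right (by simp only [List.length_append, List.length_singleton]; omega)
  · refine max_le (lcss_mono (List.Sublist.refl _) (List.sublist_append_left T [c])) ?_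
    calc 1 + lcss U T = lcss U T + 1 := add_comm _ _
      _ ≤ lcss (U ++ [c]) (T ++ [c]) := lcss_add_one_le_lcss_append_singleton U T c
      _ ≤ lcss (U ++ [c] ++ V) (T ++ [c]) :=
        lcss_mono (List.sublist_append_left _ V) (List.Sublist.refl _)

theorem lcss_append_last_occurrence {α : Type*} [DecidableEq α]
    (U V T : List α) (c : α) (hc : c ∉ V) :
    lcss (U ++ [c] ++ V) (T ++ [c]) =
      max (lcss (U ++ [c] ++ V) T) (1 + lcss U T) :=
  lcss_append_last_occurrence_general U V T c hc
end

section
/- Let S and T be strings and a, b characters with a ≠ b, such that a does not occur in T and b does not occur in S. Then the Levenshtein edit distance satisfies lev(S ++ [a], T ++ [b]) = 1 + lev(S, T); that is, when the last character of the source does not occur in the target and the last character of the target does not occur in the source, replacing one by the other is optimal. -/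
/-- Cost structure for Levenshtein edit distance (as in the former Mathlib
`Mathlib/Data/List/EditDistance/Defs.lean`, since removed from Mathlib). -/
structure Levenshtein.Cost (α β δ : Type*) where
  /-- Cost to delete an element from a list. -/
  delete : α → δ
  /-- Cost in insert an element into a list. -/
  insert : β → δ
  /-- Cost to substitute one element for another in a list. -/
  substitute : α → β → δ

/-- The default cost structure, for which all operations cost `1`. -/
def Levenshtein.defaultCost {α : Type*} [DecidableEq α] : Levenshtein.Cost α α ℕ where
  delete _ := 1
  insert _ := 1
  substitute a b := if a = b then 0 else 1

namespace Levenshtein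

/-- (Implementation detail) one step of the dynamic programming algorithm. -/
def impl {α β δ : Type*} [AddZeroClass δ] [Min δ]
    (C : Cost α β δ) (xs : List α) (y : β) (d : {r : List δ // 0 < r.length}) :
    {r : List δ // 0 < r.length} :=
  let ⟨ds, w⟩ := d
  xs.zip (ds.zip ds.tail) |>.foldr
    (init := ⟨[C.insert y + ds.getLast (List.ne_nil_of_length_pos w)], by simp⟩)
    (fun ⟨x, d₀, d₁⟩ ⟨r, w⟩ =>
      ⟨min (C.delete x + r[0]) (min (C.insert y + d₀) (C.substitute x y + d₁)) :: r, by simp⟩)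

end Levenshtein

open Levenshtein in
/-- `suffixLevenshtein C xs ys` computes the Levenshtein distance
(using the cost functions provided by `C`) from each suffix of the list `xs` to the list `ys`. -/
def suffixLevenshtein {α β δ : Type*} [AddZeroClass δ] [Min δ]
    (C : Cost α β δ) (xs : List α) (ys : List β) :
    {r : List δ // 0 < r.length} :=
  ys.foldr
    (impl C xs)
    (xs.foldr (init := ⟨[0], by simp⟩) (fun a ⟨ds, w⟩ => ⟨(C.delete a + ds[0]) :: ds, by simp⟩))

open Levenshtein in
/-- `levenshtein C xs ys` computes the Levenshtein distance
(using the cost functions provided by `C`) from the list `xs` to the list `ys`. -/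
def levenshtein {α β δ : Type*} [AddZeroClass δ] [Min δ]
    (C : Cost α β δ) (xs : List α) (ys : List β) : δ :=
  let ⟨r, w⟩ := suffixLevenshtein C xs ys
  r[0]

/-!
Replacing `a` by `b` after an optimal edit of `S` into `T` gives `≤`. For `≥`, induct on `S`
and `T` along the recurrence that peels off first characters: every entry of the table for
`S ++ [a]`, `T ++ [b]` strictly exceeds the corresponding entry for `S`, `T`. On the boundary
rows this holds because `a` matches no character of `T`, `b` none of `S`, and `a ≠ b`.
-/

open Levenshtein

namespace Levenshtein

variable {α β δ : Type*} [AddZeroClass δ] [Min δ] (C : Cost α β δ)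

theorem impl_nil_val (y : β) (d : {r : List δ // 0 < r.length}) {v : δ} (h : d.1 = [v]) :
    (impl C [] y d).1 = [C.insert y + v] := by
  obtain ⟨_, _⟩ := d
  subst h
  rfl

theorem impl_cons_val (x : α) (xs : List α) (y : β) (d e : {r : List δ // 0 < r.length})
    {d₀ : δ} (h : d.1 = d₀ :: e.1) :
    (impl C (x :: xs) y d).1 =
      min (C.delete x + (impl C xs y e).1[0]'(impl C xs y e).2)
        (min (C.insert y + d₀) (C.substitute x y + e.1[0]'e.2)) :: (impl C xs y e).1 := by
  obtain ⟨_, _⟩ := d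
  obtain ⟨_ | ⟨_, _⟩, he⟩ := e
  · simp at he
  · subst h
    rfl

theorem impl_length (xs : List α) (y : β) (d : {r : List δ // 0 < r.length})
    (h : d.1.length = xs.length + 1) : (impl C xs y d).1.length = xs.length + 1 := by
  induction xs generalizing d with
  | nil => rfl
  | cons x xs ih =>
    obtain ⟨_ | ⟨d₀, ds⟩, hd⟩ := d
    · simp at hd
    · have hds : 0 < ds.length := by simp at h; omega
      rw [impl_cons_val C x xs y _ ⟨ds, hds⟩ rfl, List.length_cons, ih _ (by simpa using h)]
      rfl

section DefaultCost

variable {α : Type*} [DecidableEq α]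

@[simp] theorem defaultCost_delete (a : α) : (defaultCost : Cost α α ℕ).delete a = 1 := rfl

@[simp] theorem defaultCost_insert (a : α) : (defaultCost : Cost α α ℕ).insert a = 1 := rfl

theorem defaultCost_substitute_of_ne {a b : α} (h : a ≠ b) :
    (defaultCost : Cost α α ℕ).substitute a b = 1 := if_neg h

end DefaultCost

end Levenshtein

section

variable {α β δ : Type*} [AddZeroClass δ] [Min δ] (C : Cost α β δ)

theorem suffixLevenshtein_length (xs : List α) (ys : List β) :
    (suffixLevenshtein C xs ys).1.length = xs.length + 1 := by
  induction ys with
  | nil => induction xs <;> simp_all [suffixLevenshtein]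
  | cons y ys ih => exact impl_length C xs y _ ih

theorem levenshtein_eq_of_suffixLevenshtein_eq {xs : List α} {ys : List β} {d : δ} {ds : List δ}
    (h : (suffixLevenshtein C xs ys).1 = d :: ds) : levenshtein C xs ys = d := by
  simp only [levenshtein]
  generalize suffixLevenshtein C xs ys = s at h ⊢
  obtain ⟨_, _⟩ := s
  subst h
  rfl

theorem suffixLevenshtein_cons_left (x : α) (xs : List α) (ys : List β) :
    (suffixLevenshtein C (x :: xs) ys).1 =
      levenshtein C (x :: xs) ys :: (suffixLevenshtein C xs ys).1 := by
  induction ys with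
  | nil => rfl
  | cons y ys ih =>
    have h : (suffixLevenshtein C (x :: xs) (y :: ys)).1 = _ := impl_cons_val C x xs y _ _ ih
    rw [levenshtein_eq_of_suffixLevenshtein_eq C h]
    exact h

@[simp] theorem levenshtein_nil_nil : levenshtein C [] [] = 0 := rfl

@[simp] theorem levenshtein_nil_cons (y : β) (ys : List β) :
    levenshtein C [] (y :: ys) = C.insert y + levenshtein C [] ys :=
  levenshtein_eq_of_suffixLevenshtein_eq C <| impl_nil_val C y _ <|
    List.eq_cons_of_length_one (suffixLevenshtein_length C [] ys)

@[simp] theorem levenshtein_cons_nil (x : α) (xs : List α) :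
    levenshtein C (x :: xs) [] = C.delete x + levenshtein C xs [] := rfl

@[simp] theorem levenshtein_cons_cons (x : α) (xs : List α) (y : β) (ys : List β) :
    levenshtein C (x :: xs) (y :: ys) =
      min (C.delete x + levenshtein C xs (y :: ys))
        (min (C.insert y + levenshtein C (x :: xs) ys) (C.substitute x y + levenshtein C xs ys)) :=
  levenshtein_eq_of_suffixLevenshtein_eq C <|
    impl_cons_val C x xs y _ _ (suffixLevenshtein_cons_left C x xs ys)

end

section

variable {α β : Type*}

theorem levenshtein_append_singleton_le (C : Cost α β ℕ) (xs : List α) (ys : List β) (a : α)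
    (b : β) :
    levenshtein C (xs ++ [a]) (ys ++ [b]) ≤ levenshtein C xs ys + C.substitute a b := by
  induction xs generalizing ys with
  | nil =>
    induction ys with
    | nil => simp
    | cons y ys ih =>
      simp only [List.nil_append, List.cons_append, levenshtein_cons_cons, levenshtein_nil_cons]
        at ih ⊢
      omega
  | cons x xs ihx =>
    induction ys with
    | nil =>
      have := ihx []
      simp only [List.cons_append, List.nil_append, levenshtein_cons_cons, levenshtein_cons_nil]
        at this ⊢
      omega
    | cons y ys ihy =>
      have h₁ := ihx (y :: ys)
      have h₂ := ihx ys
      simp only [List.cons_append, levenshtein_cons_cons] at ihy h₁ h₂ ⊢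
      omega

end

section

variable {α : Type*} [DecidableEq α]

@[simp] theorem levenshtein_defaultCost_nil_left (ys : List α) :
    levenshtein defaultCost [] ys = ys.length := by
  induction ys <;> simp_all [Nat.add_comm]

@[simp] theorem levenshtein_defaultCost_nil_right (xs : List α) :
    levenshtein defaultCost xs [] = xs.length := by
  induction xs <;> simp_all [Nat.add_comm]

theorem levenshtein_lt_levenshtein_append_singleton {xs ys : List α} {a b : α} (hab : a ≠ b)
    (ha : a ∉ ys) (hb : b ∉ xs) :
    levenshtein defaultCost xs ys < levenshtein defaultCost (xs ++ [a]) (ys ++ [b]) := by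
  induction xs generalizing ys with
  | nil =>
    induction ys with
    | nil => simp [defaultCost_substitute_of_ne hab]
    | cons y ys ih =>
      obtain ⟨hay, ha⟩ := List.ne_and_not_mem_of_not_mem_cons ha
      specialize ih ha
      simp only [List.nil_append, List.cons_append, levenshtein_cons_cons,
        levenshtein_defaultCost_nil_left, List.length_cons, List.length_append, defaultCost_delete,
        defaultCost_insert, defaultCost_substitute_of_ne hay] at ih ⊢
      omega
  | cons x xs ihx =>
    obtain ⟨hbx, hb⟩ := List.ne_and_not_mem_of_not_mem_cons hb
    induction ys with
    | nil =>
      have h₁ := ihx List.not_mem_nil hb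
      simp only [List.nil_append, List.cons_append, levenshtein_cons_cons,
        levenshtein_defaultCost_nil_right, List.length_cons, List.length_append,
        defaultCost_delete, defaultCost_insert, defaultCost_substitute_of_ne (Ne.symm hbx)]
        at h₁ ⊢
      omega
    | cons y ys ihy =>
      have h₁ := ihx ha hb
      have h₂ := ihx (List.not_mem_of_not_mem_cons ha) hb
      specialize ihy (List.not_mem_of_not_mem_cons ha)
      simp only [List.cons_append, levenshtein_cons_cons, defaultCost_delete, defaultCost_insert]
        at h₁ h₂ ihy ⊢
      omega

end

theorem levenshtein_append_not_mem {α : Type*} [DecidableEq α]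
    (S T : List α) (a b : α) (hab : a ≠ b) (haT : a ∉ T) (hbS : b ∉ S) :
    levenshtein Levenshtein.defaultCost (S ++ [a]) (T ++ [b]) =
      1 + levenshtein Levenshtein.defaultCost S T := by
  have h_le := levenshtein_append_singleton_le defaultCost S T a b
  have h_lt := levenshtein_lt_levenshtein_append_singleton hab haT hbS
  rw [defaultCost_substitute_of_ne hab] at h_le
  omega
end

section
/- For all strings S, T and every character c, the delete–replace edit distance satisfies d_DR(S ++ [c], T ++ [c]) = d_DR(S, T) (as elements of ℕ∞). -/
/-- A single delete or replace operation on a string. -/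
inductive DRStep {α : Type*} : List α → List α → Prop
  | del (U V : List α) (c : α) : DRStep (U ++ [c] ++ V) (U ++ V)
  | rep (U V : List α) (a b : α) (hab : a ≠ b) : DRStep (U ++ [a] ++ V) (U ++ [b] ++ V)

/-- A single insert or replace operation on a string. -/
inductive IRStep {α : Type*} : List α → List α → Prop
  | ins (U V : List α) (c : α) : IRStep (U ++ V) (U ++ [c] ++ V)
  | rep (U V : List α) (a b : α) (hab : a ≠ b) : IRStep (U ++ [a] ++ V) (U ++ [b] ++ V)

/-- The delete–replace edit distance, as an extended natural number:
the minimum number of single-character deletions and replacements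
transforming `S` into `T`, or `⊤` if no such sequence exists. -/
noncomputable def dDR {α : Type*} (S T : List α) : ℕ∞ :=
  sInf {n : ℕ∞ | ∃ k : ℕ, StepsIn DRStep k S T ∧ n = k}

/-- The insert–replace edit distance, as an extended natural number:
the minimum number of single-character insertions and replacements
transforming `S` into `T`, or `⊤` if no such sequence exists. -/
noncomputable def dIR {α : Type*} (S T : List α) : ℕ∞ :=
  sInf {n : ℕ∞ | ∃ k : ℕ, StepsIn IRStep k S T ∧ n = k}

lemma drstep_snoc {α : Type*} {S T : List α} (c : α) (h : DRStep S T) :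
    DRStep (S ++ [c]) (T ++ [c]) := by
  cases h with
  | del U V a => simpa [List.append_assoc] using DRStep.del U (V ++ [c]) a
  | rep U V a b hab => simpa [List.append_assoc] using DRStep.rep U (V ++ [c]) a b hab

lemma stepsIn_snoc {α : Type*} (c : α) :
    ∀ (k : ℕ) (S T : List α), StepsIn DRStep k S T → StepsIn DRStep k (S ++ [c]) (T ++ [c])
  | 0, S, T, h => by simp only [StepsIn] at h ⊢; rw [h]
  | k + 1, S, T, ⟨M, h1, h2⟩ => ⟨M ++ [c], drstep_snoc c h1, stepsIn_snoc c k M T h2⟩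

lemma stepsIn_del_last {α : Type*} (c : α) :
    ∀ (k : ℕ) (S T : List α), StepsIn DRStep k S (T ++ [c]) → StepsIn DRStep (k + 1) S T
  | 0, S, T, h => by
      simp only [StepsIn] at h
      exact ⟨T, by rw [h]; simpa using DRStep.del T [] c, rfl⟩
  | k + 1, S, T, ⟨M, h1, h2⟩ => ⟨M, h1, stepsIn_del_last c k M T h2⟩

lemma key {α : Type*} :
    ∀ (k : ℕ) (S T : List α) (b c : α), StepsIn DRStep k (S ++ [b]) (T ++ [c]) →
      ∃ j ≤ k, StepsIn DRStep j S T := by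
  intro k
  induction k with
  | zero =>
    intro S T b c h
    simp only [StepsIn] at h
    obtain ⟨hST, -⟩ := List.append_inj' h rfl
    exact ⟨0, le_refl 0, hST⟩
  | succ k ih =>
    intro S T b c h
    obtain ⟨M, hstep, hrest⟩ := h
    generalize hE : S ++ [b] = X at hstep
    cases hstep with
    | del U V a =>
      rcases V.eq_nil_or_concat with rfl | ⟨V', d, rfl⟩
      · -- deleted the last character
        simp only [List.append_nil] at *
        obtain ⟨hUS, -⟩ := List.append_inj' hE.symm rfl
        subst hUS
        exact ⟨k + 1, le_refl _, stepsIn_del_last c k U T hrest⟩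
      · have heq : (U ++ [a] ++ V') ++ [d] = S ++ [b] := by
          simpa [List.concat_eq_append, List.append_assoc] using hE.symm
        obtain ⟨hpre, -⟩ := List.append_inj' heq rfl
        have hrest' : StepsIn DRStep k ((U ++ V') ++ [d]) (T ++ [c]) := by
          simpa [List.concat_eq_append, List.append_assoc] using hrest
        obtain ⟨j, hj, hsteps⟩ := ih (U ++ V') T d c hrest'
        refine ⟨j + 1, by omega, ⟨U ++ V', ?_, hsteps⟩⟩
        rw [← hpre]
        exact DRStep.del U V' a
    | rep U V a b' hab =>
      rcases V.eq_nil_or_concat with rfl | ⟨V', d, rfl⟩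
      · simp only [List.append_nil] at *
        obtain ⟨hUS, -⟩ := List.append_inj' hE.symm rfl
        subst hUS
        obtain ⟨j, hj, hsteps⟩ := ih U T b' c hrest
        exact ⟨j, by omega, hsteps⟩
      · have heq : (U ++ [a] ++ V') ++ [d] = S ++ [b] := by
          simpa [List.concat_eq_append, List.append_assoc] using hE.symm
        obtain ⟨hpre, -⟩ := List.append_inj' heq rfl
        have hrest' : StepsIn DRStep k ((U ++ [b'] ++ V') ++ [d]) (T ++ [c]) := by
          simpa [List.concat_eq_append, List.append_assoc] using hrest
        obtain ⟨j, hj, hsteps⟩ := ih (U ++ [b'] ++ V') T d c hrest'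
        refine ⟨j + 1, by omega, ⟨U ++ [b'] ++ V', ?_, hsteps⟩⟩
        rw [← hpre]
        exact DRStep.rep U V' a b' hab

theorem dDR_append_same {α : Type*} [DecidableEq α] (S T : List α) (c : α) :
    dDR (S ++ [c]) (T ++ [c]) = dDR S T := by
  apply le_antisymm
  · apply sInf_le_sInf
    rintro n ⟨k, hk, rfl⟩
    exact ⟨k, stepsIn_snoc c k S T hk, rfl⟩
  · apply le_sInf
    rintro n ⟨k, hk, rfl⟩
    obtain ⟨j, hj, hsteps⟩ := key k S T c c hk
    have h1 : dDR S T ≤ (j : ℕ∞) := sInf_le ⟨j, hsteps, rfl⟩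
    exact h1.trans (by exact_mod_cast hj)
end

section
/- Let S = U ++ [b] ++ V be a string in which b does not occur in V and V is nonempty (so the displayed occurrence of b is the last occurrence of b in S, and it is not the last character of S). Then for every string T, the delete–replace edit distance satisfies d_DR(S, T ++ [b]) = min( |V| + d_DR(U, T), 1 + d_DR(S.dropLast, T) ) (as elements of ℕ∞), corresponding respectively to deleting the suffix V and matching b with its last occurrence in S, and to replacing the last character of S by b. -/
/-!
Reversing both strings turns the last occurrence of `b` into a first one, so it suffices to
compute `d_DR(w :: W ++ b :: X, b :: Y)` with `b ∉ w :: W`. Edit sequences are analysed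
through alignments read from the left, in which every letter of the source is kept, replaced
or deleted: a `k`-step edit sequence yields an alignment of cost at most `k`, and an alignment
of cost `n` is realised by `n` steps. In an alignment of cost `n` against `b :: Y`, the leading
`b` of the target comes either from `b :: X`, after all of `w :: W` has been deleted, which
leaves at most `n - |W| - 1` for aligning `X` against `Y`; or from replacing a letter of
`w :: W`, after the letters before it have been deleted, and then deleting that letter as well
while dropping `w` from the source aligns `W ++ b :: X` against `Y` at cost `n - 1`.
-/

section EditDistance

variable {α : Type*}

theorem StepsIn.map_s16 {β : Type*}
    {R : List α → List α → Prop} {R' : List β → List β → Prop}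
    (f : List α → List β) (hf : ∀ {S M}, R S M → R' (f S) (f M)) :
    ∀ {k : ℕ} {S T : List α}, StepsIn R k S T → StepsIn R' k (f S) (f T)
  | 0, _, _, h => congrArg f h
  | _ + 1, _, _, ⟨M, hSM, hMT⟩ => ⟨f M, hf hSM, StepsIn.map_s16 f hf hMT⟩

theorem DRStep.cons (a : α) {S M : List α} : DRStep S M → DRStep (a :: S) (a :: M)
  | .del U V c => .del (a :: U) V c
  | .rep U V c d hcd => .rep (a :: U) V c d hcd

theorem DRStep.reverse {S M : List α} : DRStep S M → DRStep S.reverse M.reverse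
  | .del U V c => by simpa using DRStep.del V.reverse U.reverse c
  | .rep U V c d hcd => by simpa using DRStep.rep V.reverse U.reverse c d hcd

theorem dDR_reverse (S T : List α) : dDR S.reverse T.reverse = dDR S T := by
  have reverse_le (S T : List α) : dDR S.reverse T.reverse ≤ dDR S T :=
    sInf_le_sInf fun _ ⟨k, hk, e⟩ => ⟨k, hk.map_s16 List.reverse DRStep.reverse, e⟩
  exact (reverse_le S T).antisymm (by simpa using reverse_le S.reverse T.reverse)

/-- An alignment of `S` against `T` of cost `n`: read from the left, every letter of `S` is
kept, replaced or deleted, and `n` counts the replacements and deletions. -/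
inductive DRAlign : List α → List α → ℕ → Prop
  | nil : DRAlign [] [] 0
  | keep {S T : List α} {n : ℕ} (a : α) : DRAlign S T n → DRAlign (a :: S) (a :: T) n
  | rep {S T : List α} {n : ℕ} {a b : α} :
      a ≠ b → DRAlign S T n → DRAlign (a :: S) (b :: T) (n + 1)
  | del {S T : List α} {n : ℕ} (a : α) : DRAlign S T n → DRAlign (a :: S) T (n + 1)

namespace DRAlign

theorem refl : ∀ S : List α, DRAlign S S 0
  | [] => .nil
  | a :: S => .keep a (refl S)

theorem del_append (W : List α) {S T : List α} {n : ℕ} (h : DRAlign S T n) :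
    DRAlign (W ++ S) T (W.length + n) := by
  induction W with
  | nil => simpa using h
  | cons w W ih => simpa [Nat.add_right_comm] using ih.del w

theorem stepsIn {S T : List α} {n : ℕ} (h : DRAlign S T n) : StepsIn DRStep n S T := by
  induction h with
  | nil => rfl
  | keep a _ ih => exact ih.map_s16 (List.cons a) (DRStep.cons a)
  | @rep S _ _ a b hab _ ih =>
    exact ⟨b :: S, .rep [] S a b hab, ih.map_s16 (List.cons b) (DRStep.cons b)⟩
  | @del S _ _ a _ ih => exact ⟨S, .del [] S a, ih⟩

/-- An edit at position `|X|` is absorbed by alignments of `X ++ Y` as soon as it is absorbed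
by alignments of `Y`. -/
theorem exists_le_append_of_forall {X Y Y' T : List α} {n : ℕ}
    (hY : ∀ {T' : List α} {n' : ℕ}, DRAlign Y T' n' → ∃ m ≤ n' + 1, DRAlign Y' T' m)
    (h : DRAlign (X ++ Y) T n) : ∃ m ≤ n + 1, DRAlign (X ++ Y') T m := by
  induction X generalizing T n with
  | nil => exact hY h
  | cons x X ih =>
    cases h with
    | keep _ h => obtain ⟨m, hm, h'⟩ := ih h; exact ⟨m, hm, .keep x h'⟩
    | rep hxy h => obtain ⟨m, hm, h'⟩ := ih h; exact ⟨m + 1, by omega, .rep hxy h'⟩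
    | del _ h => obtain ⟨m, hm, h'⟩ := ih h; exact ⟨m + 1, by omega, .del x h'⟩

theorem exists_le_of_drStep {S M T : List α} {n : ℕ} (hSM : DRStep S M) (h : DRAlign M T n) :
    ∃ m ≤ n + 1, DRAlign S T m := by
  cases hSM with
  | del X Y c =>
    rw [List.append_assoc, List.singleton_append]
    exact exists_le_append_of_forall (fun h' => ⟨_, le_rfl, .del c h'⟩) h
  | rep X Y a b hab =>
    rw [List.append_assoc, List.singleton_append] at h ⊢
    refine exists_le_append_of_forall (fun h' => ?_) h
    cases h' with
    | keep _ h' => exact ⟨_, le_rfl, .rep hab h'⟩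
    | @rep _ _ _ _ d _ h' =>
      by_cases had : a = d
      · subst had
        exact ⟨_, by omega, .keep a h'⟩
      · exact ⟨_, by omega, .rep had h'⟩
    | del _ h' => exact ⟨_, by omega, .del a h'⟩

theorem exists_le_of_stepsIn :
    ∀ {k : ℕ} {S T : List α}, StepsIn DRStep k S T → ∃ m ≤ k, DRAlign S T m
  | 0, S, _, rfl => ⟨0, le_rfl, refl S⟩
  | _ + 1, _, _, ⟨_, hSM, hMT⟩ => by
    obtain ⟨m, hm, h⟩ := exists_le_of_stepsIn hMT
    obtain ⟨m', hm', h'⟩ := exists_le_of_drStep hSM h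
    exact ⟨m', by omega, h'⟩

theorem exists_le_of_cons_right {X Y : List α} {c : α} {n : ℕ} (h : DRAlign X (c :: Y) n) :
    ∃ m ≤ n + 1, DRAlign X Y m := by
  induction X generalizing n with
  | nil => cases h
  | cons a X ih =>
    cases h with
    | keep _ h => exact ⟨_, le_rfl, .del _ h⟩
    | rep _ h => exact ⟨_, by omega, .del _ h⟩
    | del _ h => obtain ⟨m, hm, h'⟩ := ih h; exact ⟨m + 1, by omega, .del a h'⟩

theorem exists_le_of_cons_cons {X Y : List α} {b : α} {n : ℕ}
    (h : DRAlign (b :: X) (b :: Y) n) : ∃ m ≤ n, DRAlign X Y m := by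
  cases h with
  | keep _ h => exact ⟨n, le_rfl, h⟩
  | rep hbb _ => exact absurd rfl hbb
  | del _ h => exact exists_le_of_cons_right h

theorem first_occurrence {w b : α} {W X Y : List α} {n : ℕ} (hb : b ∉ w :: W)
    (h : DRAlign (w :: W ++ b :: X) (b :: Y) n) :
    (∃ m, DRAlign X Y m ∧ W.length + 1 + m ≤ n) ∨
      ∃ m, DRAlign (W ++ b :: X) Y m ∧ 1 + m ≤ n := by
  induction W generalizing w n with
  | nil =>
    cases h with
    | keep => simp at hb
    | rep _ h => exact .inr ⟨_, h, by omega⟩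
    | del _ h =>
      obtain ⟨m, hm, h⟩ := exists_le_of_cons_cons h
      exact .inl ⟨m, h, by simp; omega⟩
  | cons w' W ih =>
    cases h with
    | keep => simp at hb
    | rep _ h => exact .inr ⟨_, h, by omega⟩
    | del _ h =>
      rcases ih (List.not_mem_of_not_mem_cons hb) h with ⟨m, h, hm⟩ | ⟨m, h, hm⟩
      · exact .inl ⟨m, h, by simp; omega⟩
      · exact .inr ⟨m + 1, .del w' h, by omega⟩

theorem dDR_le {S T : List α} {n : ℕ} (h : DRAlign S T n) : dDR S T ≤ n :=
  sInf_le ⟨n, h.stepsIn, rfl⟩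

end DRAlign

theorem le_add_dDR_of_forall_align {X Y : List α} {c d : ℕ∞}
    (h : ∀ m, DRAlign X Y m → d ≤ c + m) : d ≤ c + dDR X Y := by
  by_cases hne : {n : ℕ∞ | ∃ k : ℕ, StepsIn DRStep k X Y ∧ n = k}.Nonempty
  · obtain ⟨k, hk, hdk⟩ := csInf_mem hne
    obtain ⟨m, hmk, hm⟩ := DRAlign.exists_le_of_stepsIn hk
    rw [dDR, hdk]
    exact (h m hm).trans (add_le_add_right (by exact_mod_cast hmk) c)
  · rw [Set.not_nonempty_iff_eq_empty] at hne
    simp [dDR, hne]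

theorem dDR_first_occurrence {w b : α} {W X Y : List α} (hb : b ∉ w :: W) :
    dDR (w :: W ++ b :: X) (b :: Y) =
      min ((W.length + 1 : ℕ∞) + dDR X Y) (1 + dDR (W ++ b :: X) Y) := by
  have hwb : w ≠ b := fun h => hb (h ▸ List.mem_cons_self)
  refine le_antisymm (le_min ?_ ?_) ?_
  · refine le_add_dDR_of_forall_align fun m hm => ?_
    simpa using ((hm.keep b).del_append (w :: W)).dDR_le
  · refine le_add_dDR_of_forall_align fun m hm => ?_
    simpa [add_comm] using (hm.rep hwb).dDR_le
  · conv_rhs => rw [← zero_add (dDR _ _)]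
    refine le_add_dDR_of_forall_align fun n hn => ?_
    rw [zero_add]
    rcases hn.first_occurrence hb with ⟨m, hm, hmn⟩ | ⟨m, hm, hmn⟩
    · exact min_le_of_left_le ((add_le_add_right hm.dDR_le _).trans (by exact_mod_cast hmn))
    · exact min_le_of_right_le ((add_le_add_right hm.dDR_le _).trans (by exact_mod_cast hmn))

end EditDistance

theorem dDR_append_last_occurrence_general {α : Type*}
    (U V T : List α) (b : α) (hb : b ∉ V) (hV : V ≠ []) :
    dDR (U ++ [b] ++ V) (T ++ [b]) =
      min ((V.length : ℕ∞) + dDR U T)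
        (1 + dDR (U ++ [b] ++ V).dropLast T) := by
  obtain ⟨w, W, hVw⟩ := List.exists_cons_of_ne_nil (List.reverse_ne_nil_iff.mpr hV)
  have hS : (U ++ [b] ++ V).reverse = w :: W ++ b :: U.reverse := by simp [hVw]
  have hlen : V.length = W.length + 1 := by simpa using congrArg List.length hVw
  rw [← dDR_reverse, ← dDR_reverse U, ← dDR_reverse (U ++ [b] ++ V).dropLast,
    ← List.tail_reverse, hS, hlen]
  simpa using dDR_first_occurrence (X := U.reverse) (Y := T.reverse)
    (by simpa [← hVw] using hb)

theorem dDR_append_last_occurrence {α : Type*} [DecidableEq α]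
    (U V T : List α) (b : α) (hb : b ∉ V) (hV : V ≠ []) :
    dDR (U ++ [b] ++ V) (T ++ [b]) =
      min ((V.length : ℕ∞) + dDR U T)
        (1 + dDR (U ++ [b] ++ V).dropLast T) :=
  dDR_append_last_occurrence_general U V T b hb hV
end

section
/- Let S and T be strings of the same length n that are permutations of each other, and let π : Fin n → Fin n be the canonical matching, i.e. the unique bijection such that T(π(i)) = S(i) for every i and such that, for every symbol α, π is strictly increasing on the set of positions of the occurrences of α in S (so the k-th occurrence of α in S is sent to the position of the k-th occurrence of α in T). Then the minimum number of adjacent swaps transforming S into T equals the number of inversions of π, i.e. the cardinality of { (i, j) : i < j and π(j) < π(i) }. -/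
/-- A single adjacent swap: exchanging the characters at two consecutive positions. -/
inductive SwapStep {α : Type*} : List α → List α → Prop
  | swap (U V : List α) (a b : α) : SwapStep (U ++ [a, b] ++ V) (U ++ [b, a] ++ V)

/-- The number of inversions of a map between finite index sets:
the number of pairs `(i, j)` with `i < j` and `π j < π i`. -/
def inversions {n m : ℕ} (π : Fin n → Fin m) : ℕ :=
  (Finset.univ.filter (fun p : Fin n × Fin n => p.1 < p.2 ∧ π p.2 < π p.1)).card

/-! An adjacent swap of two distinct letters composes the canonical matching with an adjacent
transposition, which changes its number of inversions by exactly one, while a swap of equal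
letters leaves the string unchanged; hence every swap lowers the inversion number by at most one.
Conversely, a matching that is not increasing has an adjacent descent `π (i + 1) < π i`; the two
letters there differ, and swapping them lowers the inversion number by exactly one. The induction
ends because an increasing matching forces `S = T`, and the canonical matching of a string with
itself is the identity. -/

section Inversions

variable {n m : ℕ}

theorem Fin.swap_lt_swap_of_lt {i j k l : Fin n} (hij : (j : ℕ) = i + 1) (hkl : k < l)
    (hne : ¬(k = i ∧ l = j)) : Equiv.swap i j k < Equiv.swap i j l := by
  simp only [Equiv.swap_apply_def, Fin.lt_def, Fin.ext_iff] at *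
  split_ifs <;> omega

theorem Fin.strictMono_of_lt_of_val_eq_add_one {β : Type*} [Preorder β] {f : Fin n → β}
    (h : ∀ i j : Fin n, (j : ℕ) = i + 1 → f i < f j) : StrictMono f := by
  cases n with
  | zero => exact fun i => i.elim0
  | succ n => exact Fin.strictMono_iff_lt_succ.mpr fun i => h _ _ (by simp)

theorem inversions_eq_zero_of_strictMono {f : Fin n → Fin m} (hf : StrictMono f) :
    inversions f = 0 := by
  simp only [inversions, Finset.card_eq_zero, Finset.filter_eq_empty_iff]
  exact fun p _ ⟨hlt, hgt⟩ => (hf hlt).not_gt hgt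

theorem inversions_comp_cast {n' : ℕ} (f : Fin n → Fin m) (h : n' = n) :
    inversions (f ∘ Fin.cast h) = inversions f := by
  subst h; rfl

theorem inversions_comp_swap_of_lt (f : Fin n → Fin m) {i j : Fin n} (hij : (j : ℕ) = i + 1)
    (h : f i < f j) : inversions (f ∘ Equiv.swap i j) = inversions f + 1 := by
  set τ := Equiv.swap i j
  set inv := Finset.univ.filter (fun p : Fin n × Fin n => p.1 < p.2 ∧ f p.2 < f p.1)
  have hi : i < j := Fin.lt_def.mpr (by omega)
  have hpair : (i, j) ∉ inv.map (τ.prodCongr τ).toEmbedding := by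
    simp [Finset.mem_map_equiv, τ, inv, hi.not_gt]
  have himage : Finset.univ.filter (fun p : Fin n × Fin n => p.1 < p.2 ∧ f (τ p.2) < f (τ p.1)) =
      insert (i, j) (inv.map (τ.prodCongr τ).toEmbedding) := by
    ext ⟨k, l⟩
    simp only [Finset.mem_filter, Finset.mem_univ, true_and, Finset.mem_insert,
      Finset.mem_map_equiv, Equiv.prodCongr_symm, Equiv.prodCongr_apply, Prod.map,
      Equiv.symm_swap, Prod.mk.injEq, τ, inv]
    constructor
    · rintro ⟨hkl, hf⟩
      by_cases hkl_ij : k = i ∧ l = j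
      · exact Or.inl hkl_ij
      · exact Or.inr ⟨Fin.swap_lt_swap_of_lt hij hkl hkl_ij, hf⟩
    · rintro (⟨rfl, rfl⟩ | ⟨hτ, hf⟩)
      · simpa using ⟨hi, h⟩
      · refine ⟨?_, hf⟩
        by_cases hτ_ij : τ k = i ∧ τ l = j
        · rw [hτ_ij.1, hτ_ij.2] at hf
          exact absurd h hf.not_gt
        · simpa [τ] using Fin.swap_lt_swap_of_lt hij hτ hτ_ij
  calc inversions (f ∘ τ) = (inv.map (τ.prodCongr τ).toEmbedding).card + 1 := by
        rw [← Finset.card_insert_of_notMem hpair, ← himage]; rfl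
    _ = inversions f + 1 := by rw [Finset.card_map]; rfl

theorem inversions_comp_swap_of_gt (f : Fin n → Fin m) {i j : Fin n} (hij : (j : ℕ) = i + 1)
    (h : f j < f i) : inversions (f ∘ Equiv.swap i j) + 1 = inversions f := by
  have := inversions_comp_swap_of_lt (f ∘ Equiv.swap i j) hij (by simpa using h)
  rw [Function.comp_assoc, ← Equiv.Perm.coe_mul, Equiv.swap_mul_self, Equiv.Perm.coe_one,
    Function.comp_id] at this
  exact this.symm

theorem inversions_le_inversions_comp_swap_add_one {f : Fin n → Fin m} (hf : f.Injective)
    {i j : Fin n} (hij : (j : ℕ) = i + 1) :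
    inversions f ≤ inversions (f ∘ Equiv.swap i j) + 1 := by
  rcases lt_trichotomy (f i) (f j) with h | h | h
  · rw [inversions_comp_swap_of_lt f hij h]; omega
  · exact absurd (hf h) (fun hij' => by rw [hij'] at hij; omega)
  · exact (inversions_comp_swap_of_gt f hij h).ge

end Inversions

section Swap

variable {α : Type*}

def List.swapPairEquiv (U V : List α) (a b : α) :
    Fin (U ++ [b, a] ++ V).length ≃ Fin (U ++ [a, b] ++ V).length :=
  (finCongr (by simp)).trans (Equiv.swap ⟨U.length, by simp⟩ ⟨U.length + 1, by simp⟩)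

theorem List.get_swapPairEquiv (U V : List α) (a b : α) (k : Fin (U ++ [b, a] ++ V).length) :
    (U ++ [a, b] ++ V).get (List.swapPairEquiv U V a b k) = (U ++ [b, a] ++ V).get k := by
  obtain ⟨k, hk⟩ := k
  simp only [List.length_append, List.length_cons, List.length_nil] at hk
  rcases lt_or_ge k U.length with hlt | hge
  · simp [List.swapPairEquiv, Equiv.swap_apply_def, Fin.ext_iff, hlt.ne,
      (Nat.lt_succ_of_lt hlt).ne, hlt, List.getElem_append_left]
  · obtain ⟨r, rfl⟩ := Nat.exists_eq_add_of_le hge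
    rcases r with _ | _ | r
    · simp [List.swapPairEquiv]
    · simp [List.swapPairEquiv]
    · simp [List.swapPairEquiv, Equiv.swap_apply_def, Fin.ext_iff, List.getElem_append_right]

theorem inversions_swapPairEquiv_trans {U V : List α} {a b : α} {m : ℕ}
    (π : Fin (U ++ [a, b] ++ V).length ≃ Fin m) :
    inversions ((List.swapPairEquiv U V a b).trans π) =
      inversions (π ∘ Equiv.swap ⟨U.length, by simp⟩ ⟨U.length + 1, by simp⟩) :=
  inversions_comp_cast (π ∘ Equiv.swap _ _) (by simp)

theorem List.exists_eq_append_pair (S : List α) {i j : Fin S.length} (hij : (j : ℕ) = i + 1) :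
    ∃ U V, U.length = (i : ℕ) ∧ S = U ++ [S.get i, S.get j] ++ V := by
  refine ⟨S.take i, S.drop (i + 2), by simp, ?_⟩
  have hj := j.isLt
  conv_lhs => rw [← List.take_append_drop i S, List.drop_eq_getElem_cons i.isLt,
    List.drop_eq_getElem_cons (by omega)]
  simp [hij]

end Swap

structure IsCanonicalMatching {α : Type*} (S T : List α) (π : Fin S.length ≃ Fin T.length) :
    Prop where
  get_apply : ∀ i, T.get (π i) = S.get i
  lt_of_lt : ∀ i j, i < j → S.get i = S.get j → π i < π j

namespace IsCanonicalMatching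

variable {α : Type*} {S T M : List α} {π : Fin S.length ≃ Fin T.length}

theorem trans {e : Fin M.length ≃ Fin S.length} (he : IsCanonicalMatching M S e)
    (hπ : IsCanonicalMatching S T π) : IsCanonicalMatching M T (e.trans π) where
  get_apply k := (hπ.get_apply (e k)).trans (he.get_apply k)
  lt_of_lt k l hkl hkl' := hπ.lt_of_lt _ _ (he.lt_of_lt k l hkl hkl')
    ((he.get_apply k).trans (hkl'.trans (he.get_apply l).symm))

theorem swapPairEquiv {U V : List α} {a b : α} (hab : a ≠ b) :
    IsCanonicalMatching (U ++ [b, a] ++ V) (U ++ [a, b] ++ V) (List.swapPairEquiv U V a b) where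
  get_apply := List.get_swapPairEquiv U V a b
  lt_of_lt k l hkl hkl' := by
    refine Fin.swap_lt_swap_of_lt rfl hkl fun ⟨hk, hl⟩ => hab ?_
    have hk' : (k : ℕ) = U.length := congrArg Fin.val hk
    have hl' : (l : ℕ) = U.length + 1 := congrArg Fin.val hl
    simpa [List.get_eq_getElem, hk', hl'] using hkl'.symm

theorem eq_refl {π : Fin S.length ≃ Fin S.length} (hπ : IsCanonicalMatching S S π) :
    π = Equiv.refl _ := by
  ext i : 1
  -- `π` restricts to an order automorphism of each letter class, and well-orders have no
  -- nontrivial automorphisms.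
  let e : {k // S.get k = S.get i} ≃ {k // S.get k = S.get i} :=
    π.subtypeEquiv fun k => by rw [hπ.get_apply]
  have he : StrictMono e := fun k l hkl => hπ.lt_of_lt _ _ hkl (k.2.trans l.2.symm)
  have hrefl : he.orderIsoOfSurjective e e.surjective = OrderIso.refl _ := Subsingleton.elim _ _
  exact congrArg Subtype.val (DFunLike.congr_fun hrefl ⟨i, rfl⟩)

theorem eq_of_strictMono (hπ : IsCanonicalMatching S T π) (hmono : StrictMono π) : S = T := by
  have hval := Fin.coe_orderIso_apply (hmono.orderIsoOfSurjective π π.surjective)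
  refine List.ext_get (Fin.equiv_iff_eq.mp ⟨π⟩) fun k hkS hkT => ?_
  rw [← hπ.get_apply ⟨k, hkS⟩]
  exact congrArg T.get (Fin.ext (hval _))

theorem exists_swapStep_of_lt (hπ : IsCanonicalMatching S T π) {i j : Fin S.length}
    (hij : (j : ℕ) = i + 1) (hji : π j < π i) :
    ∃ (M : List α) (π' : Fin M.length ≃ Fin T.length),
      SwapStep S M ∧ IsCanonicalMatching M T π' ∧ inversions π' + 1 = inversions π := by
  have hab : S.get i ≠ S.get j := fun h =>
    (hπ.lt_of_lt i j (Fin.lt_def.mpr (by omega)) h).not_gt hji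
  obtain ⟨U, V, hU, hS⟩ := S.exists_eq_append_pair hij
  generalize S.get i = a at hS hab
  generalize S.get j = b at hS hab
  subst hS
  obtain rfl : i = ⟨U.length, by simp⟩ := Fin.ext hU.symm
  obtain rfl : j = ⟨U.length + 1, by simp⟩ := Fin.ext hij
  exact ⟨_, _, SwapStep.swap U V a b, (swapPairEquiv hab).trans hπ,
    by rw [inversions_swapPairEquiv_trans, inversions_comp_swap_of_gt π rfl hji]⟩

theorem exists_le_of_swapStep (hπ : IsCanonicalMatching S T π) (h : SwapStep S M) :
    ∃ π' : Fin M.length ≃ Fin T.length,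
      IsCanonicalMatching M T π' ∧ inversions π ≤ inversions π' + 1 := by
  obtain ⟨U, V, a, b⟩ := h
  by_cases hab : a = b
  · subst hab
    exact ⟨π, hπ, Nat.le_succ _⟩
  · refine ⟨_, (swapPairEquiv hab).trans hπ, ?_⟩
    rw [inversions_swapPairEquiv_trans]
    exact inversions_le_inversions_comp_swap_add_one π.injective rfl

theorem inversions_le_of_stepsIn (hπ : IsCanonicalMatching S T π) {k : ℕ}
    (h : StepsIn SwapStep k S T) : inversions π ≤ k := by
  induction k generalizing S with
  | zero =>
    obtain rfl : S = T := h
    simp [hπ.eq_refl, inversions_eq_zero_of_strictMono strictMono_id]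
  | succ k ih =>
    obtain ⟨M, hSM, hMT⟩ := h
    obtain ⟨π', hπ', hle⟩ := hπ.exists_le_of_swapStep hSM
    exact hle.trans (Nat.succ_le_succ (ih hπ' hMT))

theorem stepsIn_inversions (hπ : IsCanonicalMatching S T π) :
    StepsIn SwapStep (inversions π) S T := by
  induction hN : inversions π using Nat.strong_induction_on generalizing S with
  | _ N ih =>
  by_cases hdesc : ∃ i j : Fin S.length, (j : ℕ) = i + 1 ∧ π j < π i
  · obtain ⟨i, j, hij, hji⟩ := hdesc
    obtain ⟨M, π', hSM, hπ', hinv⟩ := hπ.exists_swapStep_of_lt hij hji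
    obtain rfl : N = inversions π' + 1 := by omega
    exact ⟨M, hSM, ih _ (Nat.lt_succ_self _) hπ' rfl⟩
  · push Not at hdesc
    have hmono : StrictMono π := Fin.strictMono_of_lt_of_val_eq_add_one fun i j hij =>
      (hdesc i j hij).lt_of_ne (π.injective.ne (fun h => by rw [h] at hij; omega))
    subst hN
    rw [inversions_eq_zero_of_strictMono hmono]
    exact hπ.eq_of_strictMono hmono

end IsCanonicalMatching

theorem swap_distance_eq_inversions_general {α : Type*}
    (S T : List α)
    (π : Fin S.length ≃ Fin T.length)
    (hmatch : ∀ i : Fin S.length, T.get (π i) = S.get i)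
    (hmono : ∀ i j : Fin S.length, i < j → S.get i = S.get j → π i < π j) :
    sInf {k | StepsIn SwapStep k S T} = inversions (fun i => π i) := by
  have hπ : IsCanonicalMatching S T π := ⟨hmatch, hmono⟩
  exact le_antisymm (Nat.sInf_le hπ.stepsIn_inversions)
    (le_csInf ⟨_, hπ.stepsIn_inversions⟩ fun _ => hπ.inversions_le_of_stepsIn)

theorem swap_distance_eq_inversions {α : Type*} [DecidableEq α]
    (S T : List α) (hperm : S.Perm T)
    (π : Fin S.length ≃ Fin T.length)
    (hmatch : ∀ i : Fin S.length, T.get (π i) = S.get i)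
    (hmono : ∀ i j : Fin S.length, i < j → S.get i = S.get j → π i < π j) :
    sInf {k | StepsIn SwapStep k S T} = inversions (fun i => π i) :=
  swap_distance_eq_inversions_general S T π hmatch hmono
end

section
/- Let S and T be strings of the same length n that are permutations of each other, and let π : Fin n → Fin n be the canonical matching, i.e. the unique bijection such that T(π(i)) = S(i) for every i and such that, for every symbol α, π is strictly increasing on the set of positions of the occurrences of α in S. Then for every bijection σ : Fin n → Fin n satisfying T(σ(i)) = S(i) for every i, the number of inversions of π is at most the number of inversions of σ; that is, among all bijections realizing T from S, the one mapping the i-th occurrence of each symbol in S to the i-th occurrence of that symbol in T minimizes the inversion count. -/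
open Finset

/-- Symmetrized contribution of an unordered pair to the inversion count. -/
def cpair {n m : ℕ} (f : Fin n → Fin m) (k x : Fin n) : ℕ :=
  (if k < x ∧ f x < f k then 1 else 0) + (if x < k ∧ f k < f x then 1 else 0)

lemma cpair_comm {n m : ℕ} (f : Fin n → Fin m) (k x : Fin n) :
    cpair f k x = cpair f x k := add_comm _ _

lemma cpair_self {n m : ℕ} (f : Fin n → Fin m) (k : Fin n) : cpair f k k = 0 := by
  simp [cpair]

lemma grid_sum {n m : ℕ} (f : Fin n → Fin m) :
    ∑ k : Fin n, ∑ x : Fin n, cpair f k x = 2 * inversions f := by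
  unfold inversions
  rw [Finset.card_filter, Fintype.sum_prod_type]
  unfold cpair
  rw [two_mul]
  have h2 : ∑ k : Fin n, ∑ x : Fin n,
      ((if k < x ∧ f x < f k then 1 else 0) + (if x < k ∧ f k < f x then 1 else 0)) =
      (∑ k : Fin n, ∑ x : Fin n, (if k < x ∧ f x < f k then 1 else 0)) +
      (∑ k : Fin n, ∑ x : Fin n, (if x < k ∧ f k < f x then 1 else 0)) := by
    simp [Finset.sum_add_distrib]
  rw [h2]
  congr 1
  rw [Finset.sum_comm]

lemma key_ineq {n m : ℕ} (f : Fin n → Fin m) (i j k : Fin n) (hij : i < j)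
    (hf : f j < f i) (hki : k ≠ i) (hkj : k ≠ j) :
    cpair (fun x => f (Equiv.swap i j x)) k i + cpair (fun x => f (Equiv.swap i j x)) k j
      ≤ cpair f k i + cpair f k j := by
  have hk : Equiv.swap i j k = k := Equiv.swap_apply_of_ne_of_ne hki hkj
  simp only [cpair, hk, Equiv.swap_apply_left, Equiv.swap_apply_right]
  have h1 : (i : ℕ) < (j : ℕ) := hij
  have h2 : (f j : ℕ) < (f i : ℕ) := hf
  simp only [Fin.lt_def]
  split_ifs <;> omega

lemma inversions_swap_lt {n m : ℕ} (f : Fin n → Fin m) (i j : Fin n) (hij : i < j)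
    (hf : f j < f i) :
    inversions (fun k => f (Equiv.swap i j k)) < inversions f := by
  set g : Fin n → Fin m := fun k => f (Equiv.swap i j k) with hg
  have hne : i ≠ j := ne_of_lt hij
  have hgi : g i = f j := by simp [hg]
  have hgj : g j = f i := by simp [hg]
  have hgo : ∀ k, k ≠ i → k ≠ j → g k = f k := by
    intro k h1 h2
    simp [hg, Equiv.swap_apply_of_ne_of_ne h1 h2]
  suffices h : (∑ k : Fin n, ∑ x : Fin n, cpair g k x) + 2 ≤
      ∑ k : Fin n, ∑ x : Fin n, cpair f k x by
    have e1 := grid_sum f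
    have e2 := grid_sum g
    omega
  set E : Finset (Fin n) := (univ.erase i).erase j with hE
  have hjE : j ∈ (univ : Finset (Fin n)).erase i := mem_erase.mpr ⟨hne.symm, mem_univ j⟩
  have hEmem : ∀ k ∈ E, k ≠ i ∧ k ≠ j := by
    intro k hk
    rw [hE] at hk
    have h1 := mem_erase.mp hk
    have h2 := mem_erase.mp h1.2
    exact ⟨h2.1, h1.1⟩
  have hsplit : ∀ (h : Fin n → Fin m) (k : Fin n),
      ∑ x : Fin n, cpair h k x = (∑ x ∈ E, cpair h k x) + cpair h k j + cpair h k i := by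
    intro h k
    rw [← Finset.sum_erase_add _ _ (mem_univ i), ← Finset.sum_erase_add _ _ hjE]
  have houter : ∀ (h : Fin n → Fin m),
      ∑ k : Fin n, ∑ x : Fin n, cpair h k x =
        (∑ k ∈ E, ∑ x : Fin n, cpair h k x) + (∑ x : Fin n, cpair h j x)
          + (∑ x : Fin n, cpair h i x) := by
    intro h
    rw [← Finset.sum_erase_add _ _ (mem_univ i), ← Finset.sum_erase_add _ _ hjE]
  -- pair contributions off {i,j} coincide
  have hsame : ∀ k x : Fin n, k ≠ i → k ≠ j → x ≠ i → x ≠ j → cpair g k x = cpair f k x := by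
    intro k x hk1 hk2 hx1 hx2
    unfold cpair
    rw [hgo k hk1 hk2, hgo x hx1 hx2]
  -- inner sums over E-rows
  have hrow : ∀ k ∈ E, ∑ x : Fin n, cpair g k x ≤ ∑ x : Fin n, cpair f k x := by
    intro k hk
    obtain ⟨hk1, hk2⟩ := hEmem k hk
    rw [hsplit g k, hsplit f k]
    have hEeq : ∑ x ∈ E, cpair g k x = ∑ x ∈ E, cpair f k x := by
      apply Finset.sum_congr rfl
      intro x hx
      obtain ⟨hx1, hx2⟩ := hEmem x hx
      exact hsame k x hk1 hk2 hx1 hx2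
    have hkey := key_ineq f i j k hij hf hk1 hk2
    have hgk : (fun x => f (Equiv.swap i j x)) = g := rfl
    rw [hgk] at hkey
    omega
  have hrows : ∑ k ∈ E, ∑ x : Fin n, cpair g k x ≤ ∑ k ∈ E, ∑ x : Fin n, cpair f k x :=
    Finset.sum_le_sum hrow
  -- rows i and j
  have hij_g : cpair g i j = 0 := by
    simp only [cpair, hgi, hgj]
    have : ¬ f i < f j := not_lt.mpr (le_of_lt hf)
    have hji : ¬ j < i := not_lt.mpr (le_of_lt hij)
    simp [this, hji]
  have hij_f : cpair f i j = 1 := by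
    simp only [cpair]
    have hji : ¬ j < i := not_lt.mpr (le_of_lt hij)
    simp [hij, hf, hji]
  have hEi : ∀ (h : Fin n → Fin m),
      (∑ x : Fin n, cpair h j x) + (∑ x : Fin n, cpair h i x) =
        (∑ x ∈ E, (cpair h x j + cpair h x i)) + 2 * cpair h i j := by
    intro h
    rw [hsplit h j, hsplit h i, cpair_self, cpair_self, Finset.sum_add_distrib]
    have e1 : ∑ x ∈ E, cpair h j x = ∑ x ∈ E, cpair h x j :=
      Finset.sum_congr rfl fun x _ => cpair_comm h j x
    have e2 : ∑ x ∈ E, cpair h i x = ∑ x ∈ E, cpair h x i :=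
      Finset.sum_congr rfl fun x _ => cpair_comm h i x
    have e3 : cpair h j i = cpair h i j := cpair_comm h j i
    rw [e1, e2, e3]
    ring
  have hEsum : ∑ x ∈ E, (cpair g x j + cpair g x i) ≤
      ∑ x ∈ E, (cpair f x j + cpair f x i) := by
    apply Finset.sum_le_sum
    intro x hx
    obtain ⟨hx1, hx2⟩ := hEmem x hx
    have hkey := key_ineq f i j x hij hf hx1 hx2
    have hgk : (fun y => f (Equiv.swap i j y)) = g := rfl
    rw [hgk] at hkey
    omega
  rw [houter g, houter f]
  have h1 := hEi g
  have h2 := hEi f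
  omega

/-- Uniqueness of the canonical (class-monotone) matching. -/
lemma sigma_eq_pi {α : Type*} [DecidableEq α] (S T : List α)
    (π : Fin S.length ≃ Fin T.length) (hπ : ∀ i, T.get (π i) = S.get i)
    (hmono : ∀ i j, i < j → S.get i = S.get j → π i < π j)
    (σ : Fin S.length ≃ Fin T.length) (hσ : ∀ i, T.get (σ i) = S.get i)
    (hσmono : ∀ i j, i < j → S.get i = S.get j → σ i < σ j)
    (i : Fin S.length) : σ i = π i := by
  set a := S.get i with ha
  set A : Finset (Fin S.length) := univ.filter (fun k => S.get k = a) with hA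
  set B : Finset (Fin T.length) := univ.filter (fun k => T.get k = a) with hB
  have hAi : i ∈ A := Finset.mem_filter.mpr ⟨Finset.mem_univ _, rfl⟩
  have himg : ∀ (τ : Fin S.length ≃ Fin T.length), (∀ k, T.get (τ k) = S.get k) →
      B = A.image τ := by
    intro τ hτ
    ext b
    simp only [hA, hB, Finset.mem_image, Finset.mem_filter, Finset.mem_univ, true_and]
    constructor
    · intro hb
      refine ⟨τ.symm b, ?_, by simp⟩
      have := hτ (τ.symm b)
      rw [Equiv.apply_symm_apply] at this
      rw [← this]; exact hb
    · rintro ⟨x, hx, rfl⟩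
      rw [hτ x]; exact hx
  have hcard : B.card = A.card := by
    rw [himg π hπ]
    exact Finset.card_image_of_injective _ π.injective
  set e := A.orderIsoOfFin rfl with he
  have hclass : ∀ x : Fin A.card, S.get ((e x : {y // y ∈ A}) : Fin S.length) = a := by
    intro x
    have := (e x).2
    exact (Finset.mem_filter.mp this).2
  have hcoe_lt : ∀ x y : Fin A.card, x < y →
      ((e x : {z // z ∈ A}) : Fin S.length) < ((e y : {z // z ∈ A}) : Fin S.length) := by
    intro x y hxy
    exact e.strictMono hxy
  have huniq : ∀ (τ : Fin S.length ≃ Fin T.length), (∀ k, T.get (τ k) = S.get k) →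
      (∀ p q, p < q → S.get p = S.get q → τ p < τ q) →
      (fun x : Fin A.card => τ ((e x : {z // z ∈ A}) : Fin S.length)) =
        ⇑(B.orderEmbOfFin hcard) := by
    intro τ hτ hτmono
    apply Finset.orderEmbOfFin_unique hcard
    · intro x
      rw [hB, Finset.mem_filter]
      refine ⟨mem_univ _, ?_⟩
      rw [hτ]; exact hclass x
    · intro x y hxy
      exact hτmono _ _ (hcoe_lt x y hxy) (by rw [hclass x, hclass y])
  have hστ : ∀ x : Fin A.card, σ ((e x : {z // z ∈ A}) : Fin S.length) =
      π ((e x : {z // z ∈ A}) : Fin S.length) := by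
    intro x
    have h1 := huniq σ hσ hσmono
    have h2 := huniq π hπ hmono
    have := congrFun (h1.trans h2.symm) x
    exact this
  have hx : ((e (e.symm ⟨i, hAi⟩) : {z // z ∈ A}) : Fin S.length) = i := by
    rw [OrderIso.apply_symm_apply]
  have := hστ (e.symm ⟨i, hAi⟩)
  rw [hx] at this
  exact this

theorem canonical_matching_minimizes_inversions {α : Type*} [DecidableEq α]
    (S T : List α) (hperm : S.Perm T)
    (π : Fin S.length ≃ Fin T.length)
    (hπ : ∀ i : Fin S.length, T.get (π i) = S.get i)
    (hmono : ∀ i j : Fin S.length, i < j → S.get i = S.get j → π i < π j)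
    (σ : Fin S.length ≃ Fin T.length)
    (hσ : ∀ i : Fin S.length, T.get (σ i) = S.get i) :
    inversions (fun i => π i) ≤ inversions (fun i => σ i) := by
  suffices H : ∀ N (τ : Fin S.length ≃ Fin T.length),
      (∀ i, T.get (τ i) = S.get i) → inversions (fun i => τ i) ≤ N →
      inversions (fun i => π i) ≤ N from H _ σ hσ le_rfl
  intro N
  induction N using Nat.strong_induction_on with
  | _ N IH =>
    intro τ hτ hle
    by_cases hmτ : ∀ i j, i < j → S.get i = S.get j → τ i < τ j
    · have heq : ∀ i, τ i = π i := fun i => sigma_eq_pi S T π hπ hmono τ hτ hmτ i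
      have : (fun i => π i) = (fun i => τ i) := funext fun i => (heq i).symm
      rw [this]; exact hle
    · push_neg at hmτ
      obtain ⟨i, j, hij, hSeq, hnot⟩ := hmτ
      have hne : τ j ≠ τ i := fun h => (ne_of_gt hij) (τ.injective h)
      have hlt : τ j < τ i := lt_of_le_of_ne hnot hne
      set τ' := (Equiv.swap i j).trans τ with hτ'
      have hτ'T : ∀ k, T.get (τ' k) = S.get k := by
        intro k
        show T.get (τ (Equiv.swap i j k)) = S.get k
        rw [hτ (Equiv.swap i j k)]
        by_cases h1 : k = i
        · subst h1; rw [Equiv.swap_apply_left]; exact hSeq.symm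
        by_cases h2 : k = j
        · subst h2; rw [Equiv.swap_apply_right]; exact hSeq
        rw [Equiv.swap_apply_of_ne_of_ne h1 h2]
      have hinv : inversions (fun k => τ' k) < inversions (fun k => τ k) :=
        inversions_swap_lt (fun k => τ k) i j hij hlt
      have hM : inversions (fun k => τ' k) < N := lt_of_lt_of_le hinv hle
      exact le_trans (IH _ hM τ' hτ'T le_rfl) (le_of_lt hM)
end
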